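/- Let D ∈ ℝ^{p×n}, ε > 0, and for fixed u_k ∈ ℝⁿ set z = D u_k and W = diag((z_ℓ² + ε²)^{-1/4}). Then for all u ∈ ℝⁿ, ∑_ℓ √((Du)_ℓ² + ε²) ≤ (1/2)‖W D u‖₂² + c, where c = ∑_ℓ (√(z_ℓ² + ε²)/2 + ε²/(2√(z_ℓ² + ε²))) is a constant independent of u, with equality at u = u_k. -/

import Mathlib

/-!
Majorization by AM–GM: for `s > 0` and `x ≥ 0` one has `√x ≤ x / (2s) + s / 2`, with equality at
`x = s²`. Taking `x = (Du)ₗ² + ε²` and `s = √(zₗ² + ε²)` gives, coordinatewise, a quadratic in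
`(Du)ₗ` touching `√((Du)ₗ² + ε²)` at `u = u_k`; its quadratic coefficient `1 / (2s)` is exactly
half the squared weight `Wₗₗ² = s⁻¹`.
-/

open Real

theorem Real.sqrt_le_div_add_half {x s : ℝ} (hx : 0 ≤ x) (hs : 0 < s) :
    √x ≤ x / (2 * s) + s / 2 := by
  have amgm : 2 * s * √x ≤ x + s ^ 2 := by
    linarith [two_mul_le_add_sq s √x, sq_sqrt hx]
  rw [div_add_div _ _ (by positivity) two_ne_zero, le_div_iff₀ (by positivity)]
  nlinarith

theorem Real.rpow_neg_quarter_mul_sq {S : ℝ} (hS : 0 ≤ S) (a : ℝ) :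
    (S ^ (-(1 / 4 : ℝ)) * a) ^ 2 = a ^ 2 / √S := by
  rw [mul_pow, ← rpow_natCast, ← rpow_mul hS, sqrt_eq_rpow, div_eq_mul_inv (a ^ 2), ← rpow_neg hS,
    mul_comm]
  norm_num

noncomputable def tvMajorant (ε z a : ℝ) : ℝ :=
  (a ^ 2 + ε ^ 2) / (2 * √(z ^ 2 + ε ^ 2)) + √(z ^ 2 + ε ^ 2) / 2

theorem sqrt_sq_add_sq_le_tvMajorant {ε : ℝ} (hε : ε ≠ 0) (z a : ℝ) :
    √(a ^ 2 + ε ^ 2) ≤ tvMajorant ε z a :=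
  sqrt_le_div_add_half (by positivity) (sqrt_pos.2 (by positivity))

theorem tvMajorant_self (ε z : ℝ) : tvMajorant ε z z = √(z ^ 2 + ε ^ 2) := by
  rw [tvMajorant, mul_comm, ← div_div, div_sqrt]
  ring

theorem half_weighted_sq_add_eq_tvMajorant (ε z a : ℝ) :
    1 / 2 * ((z ^ 2 + ε ^ 2) ^ (-(1 / 4 : ℝ)) * a) ^ 2 +
        (√(z ^ 2 + ε ^ 2) / 2 + ε ^ 2 / (2 * √(z ^ 2 + ε ^ 2))) =
      tvMajorant ε z a := by
  rw [rpow_neg_quarter_mul_sq (by positivity), tvMajorant]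
  ring

/-- IRLS majorization of the smoothed anisotropic-TV regularizer
`∑ √((Du)ₗ² + ε²)` by `(1/2)‖W D u‖₂² + c`, with equality at the current
iterate `u_k`, where `W = diag((zₗ²+ε²)^(-1/4))`, `z = D u_k`. -/
theorem stmt4 {p n : ℕ} (D : Matrix (Fin p) (Fin n) ℝ) (ε : ℝ) (hε : 0 < ε)
    (uk : Fin n → ℝ) :
    let z : Fin p → ℝ := D.mulVec uk
    let W : Matrix (Fin p) (Fin p) ℝ :=
      Matrix.diagonal fun ℓ => ((z ℓ) ^ 2 + ε ^ 2) ^ (-(1 / 4 : ℝ))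
    let c : ℝ := ∑ ℓ, (Real.sqrt ((z ℓ) ^ 2 + ε ^ 2) / 2 +
      ε ^ 2 / (2 * Real.sqrt ((z ℓ) ^ 2 + ε ^ 2)))
    (∀ u : Fin n → ℝ,
      (∑ ℓ, Real.sqrt ((D.mulVec u ℓ) ^ 2 + ε ^ 2)) ≤
        (1 / 2) * (∑ ℓ, ((W * D).mulVec u ℓ) ^ 2) + c) ∧
    (∑ ℓ, Real.sqrt ((D.mulVec uk ℓ) ^ 2 + ε ^ 2)) =
        (1 / 2) * (∑ ℓ, ((W * D).mulVec uk ℓ) ^ 2) + c := by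
  intro z W c
  have surrogate_eq : ∀ u, (1 / 2) * (∑ ℓ, ((W * D).mulVec u ℓ) ^ 2) + c =
      ∑ ℓ, tvMajorant ε (z ℓ) (D.mulVec u ℓ) := by
    intro u
    simp only [W, c, ← Matrix.mulVec_mulVec, Matrix.mulVec_diagonal, Finset.mul_sum,
      ← Finset.sum_add_distrib, half_weighted_sq_add_eq_tvMajorant]
  refine ⟨fun u => ?_, ?_⟩
  · rw [surrogate_eq]
    exact Finset.sum_le_sum fun ℓ _ => sqrt_sq_add_sq_le_tvMajorant hε.ne' _ _
  · rw [surrogate_eq]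
    exact Finset.sum_congr rfl fun ℓ _ => (tvMajorant_self ε (z ℓ)).symm
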